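/- For any i < n, ℚ_n(L₀,...,L_{n-1}) is order isomorphic to ℚ_n(L₀,...,L_{n-1}) ^ L_i ^ ℚ_n(L₀,...,L_{n-1}): inserting a single copy of one of the shuffled orders between two copies of the shuffle yields the shuffle again. -/

import Mathlib

/-!
By back-and-forth, `ℚ_n` is unique up to colour-preserving isomorphism. The order
`Q ^ 1 ^ Q`, with the middle point coloured `i`, is again a copy of `ℚ_n`, hence
colour-isomorphic to `Q`. Replacing each point of colour `j` by `L j`, the shuffle over
`Q ^ 1 ^ Q` splits into the shuffle over `Q`, then `L i`, then the shuffle over `Q`.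
-/

/-- `Q` together with the colouring `c : Q → Fin n` is a copy of the `n`-coloured
rationals `ℚ_n`: a countable nonempty dense linear order without endpoints in which
each of the `n` colours occurs interdensely. -/
def IsQn (n : ℕ) (Q : Type*) [LinearOrder Q] (c : Q → Fin n) : Prop :=
  Countable Q ∧ Nonempty Q ∧ DenselyOrdered Q ∧ NoMinOrder Q ∧ NoMaxOrder Q ∧
    ∀ x y : Q, x < y → ∀ i : Fin n, ∃ z : Q, x < z ∧ z < y ∧ c z = i

noncomputable section

open Sum

variable {n : ℕ} {σ ι κ α β : Type*}
  [LinearOrder ι] [LinearOrder κ] [LinearOrder α] [LinearOrder β]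

instance [Countable α] [Countable β] : Countable (α ⊕ₗ β) :=
  inferInstanceAs (Countable (α ⊕ β))

def IsInterdense (c : α → σ) : Prop :=
  ∀ x y : α, x < y → ∀ j, ∃ z, x < z ∧ z < y ∧ c z = j

namespace IsInterdense

variable {cα : α → σ} {cβ : β → σ}

theorem of_subsingleton [Subsingleton α] (c : α → σ) : IsInterdense c :=
  fun x y h => absurd (Subsingleton.elim x y) h.ne

theorem exists_gt [NoMaxOrder α] (h : IsInterdense cα) (a : α) (j : σ) :
    ∃ z, a < z ∧ cα z = j := by
  obtain ⟨a', ha'⟩ := NoMaxOrder.exists_gt a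
  obtain ⟨z, haz, -, hz⟩ := h a a' ha' j
  exact ⟨z, haz, hz⟩

theorem exists_lt [NoMinOrder α] (h : IsInterdense cα) (a : α) (j : σ) :
    ∃ z, z < a ∧ cα z = j := by
  obtain ⟨a', ha'⟩ := NoMinOrder.exists_lt a
  obtain ⟨z, -, hza, hz⟩ := h a' a ha' j
  exact ⟨z, hza, hz⟩

theorem sumLex (hα : IsInterdense cα) (hβ : IsInterdense cβ)
    (hcross : ∀ a b j, ∃ z : α ⊕ₗ β,
      toLex (inl a) < z ∧ z < toLex (inr b) ∧ Sum.elim cα cβ (ofLex z) = j) :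
    IsInterdense (Sum.elim cα cβ ∘ ofLex) := by
  rintro (a | b) (a' | b') h j
  · obtain ⟨z, h₁, h₂, hz⟩ := hα a a' (Sum.Lex.inl_lt_inl_iff.1 h) j
    exact ⟨toLex (inl z), Sum.Lex.inl_lt_inl_iff.2 h₁, Sum.Lex.inl_lt_inl_iff.2 h₂, hz⟩
  · exact hcross a b' j
  · exact absurd h Sum.Lex.not_inr_lt_inl
  · obtain ⟨z, h₁, h₂, hz⟩ := hβ b b' (Sum.Lex.inr_lt_inr_iff.1 h) j
    exact ⟨toLex (inr z), Sum.Lex.inr_lt_inr_iff.2 h₁, Sum.Lex.inr_lt_inr_iff.2 h₂, hz⟩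

theorem sumLex_of_noMaxOrder [NoMaxOrder α] (hα : IsInterdense cα) (hβ : IsInterdense cβ) :
    IsInterdense (Sum.elim cα cβ ∘ ofLex) :=
  hα.sumLex hβ fun a _ j =>
    let ⟨z, haz, hz⟩ := hα.exists_gt a j
    ⟨toLex (inl z), Sum.Lex.inl_lt_inl_iff.2 haz, Sum.Lex.inl_lt_inr _ _, hz⟩

theorem sumLex_of_noMinOrder [NoMinOrder β] (hα : IsInterdense cα) (hβ : IsInterdense cβ) :
    IsInterdense (Sum.elim cα cβ ∘ ofLex) :=
  hα.sumLex hβ fun _ b j =>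
    let ⟨z, hzb, hz⟩ := hβ.exists_lt b j
    ⟨toLex (inr z), Sum.Lex.inl_lt_inr _ _, Sum.Lex.inr_lt_inr_iff.2 hzb, hz⟩

end IsInterdense

namespace IsQn

variable {cα : α → Fin n} {cβ : β → Fin n}

theorem sumLex_unit_sumLex (hα : IsQn n α cα) (hβ : IsQn n β cβ) (j : Fin n) :
    IsQn n (α ⊕ₗ (Unit ⊕ₗ β))
      (Sum.elim cα (Sum.elim (fun _ => j) cβ ∘ ofLex) ∘ ofLex) := by
  obtain ⟨_, hne, _, _, _, hαi⟩ := hα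
  obtain ⟨_, _, _, _, _, hβi⟩ := hβ
  exact ⟨inferInstance, hne.map (toLex ∘ inl), inferInstance, inferInstance, inferInstance,
    IsInterdense.sumLex_of_noMaxOrder hαi
      ((IsInterdense.of_subsingleton _).sumLex_of_noMinOrder hβi)⟩

theorem exists_between_finsets (hβ : IsQn n β cβ) (lo hi : Finset β)
    (lo_lt_hi : ∀ x ∈ lo, ∀ y ∈ hi, x < y) (j : Fin n) :
    ∃ m : β, cβ m = j ∧ (∀ x ∈ lo, x < m) ∧ ∀ y ∈ hi, m < y := by
  obtain ⟨-, _, _, _, _, hc⟩ := hβ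
  obtain ⟨m, hlo, hhi⟩ := Order.exists_between_finsets lo hi lo_lt_hi
  obtain ⟨m', hmm', hhi'⟩ := Order.exists_between_finsets {m} hi (by simpa using hhi)
  obtain ⟨z, hmz, hzm', hz⟩ := hc m m' (hmm' m (Finset.mem_singleton_self m)) j
  exact ⟨z, hz, fun x hx => (hlo x hx).trans hmz, fun y hy => hzm'.trans (hhi' y hy)⟩

theorem exists_cmp_eq (hβ : IsQn n β cβ) {S : Finset β} {b : β} (hb : b ∉ S) (j : Fin n) :
    ∃ b', cβ b' = j ∧ ∀ s ∈ S, cmp s b' = cmp s b := by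
  obtain ⟨b', hcol, hlo, hhi⟩ :=
    hβ.exists_between_finsets (S.filter (· < b)) (S.filter (b < ·))
      (fun _ hx _ hy => (Finset.mem_filter.1 hx).2.trans (Finset.mem_filter.1 hy).2) j
  refine ⟨b', hcol, fun s hs => ?_⟩
  rcases lt_or_gt_of_ne (ne_of_mem_of_not_mem hs hb) with h | h
  · rw [(cmp_eq_lt_iff _ _).2 h, (cmp_eq_lt_iff _ _).2 (hlo s (by simp [hs, h]))]
  · rw [(cmp_eq_gt_iff _ _).2 h, (cmp_eq_gt_iff _ _).2 (hhi s (by simp [hs, h]))]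

end IsQn

variable (cα : α → σ) (cβ : β → σ)

def ColouredPartialIso : Type _ :=
  { f : Order.PartialIso α β // ∀ p ∈ f.val, cβ p.2 = cα p.1 }

namespace ColouredPartialIso

instance : Preorder (ColouredPartialIso cα cβ) := Subtype.preorder _

instance : Inhabited (ColouredPartialIso cα cβ) := ⟨⟨default, by simp [default]⟩⟩

variable {cα cβ}

protected def comm (f : ColouredPartialIso cα cβ) : ColouredPartialIso cβ cα :=
  ⟨f.val.comm, by
    simp only [Order.PartialIso.comm, Subtype.map, Finset.mem_image]
    rintro _ ⟨p, hp, rfl⟩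
    exact (f.prop p hp).symm⟩

theorem mem_comm {f : ColouredPartialIso cα cβ} {a : α} {b : β} :
    (b, a) ∈ f.comm.val.val ↔ (a, b) ∈ f.val.val := by
  simp [ColouredPartialIso.comm, Order.PartialIso.comm, Subtype.map]

theorem comm_comm (f : ColouredPartialIso cα cβ) : f.comm.comm = f := by
  refine Subtype.ext (Subtype.ext ?_)
  simp [ColouredPartialIso.comm, Order.PartialIso.comm, Subtype.map, Finset.image_image]

theorem comm_le_comm {f g : ColouredPartialIso cα cβ} (h : f ≤ g) : f.comm ≤ g.comm :=
  Finset.image_subset_image h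

variable {cα : α → Fin n} {cβ : β → Fin n}

theorem exists_across (hβ : IsQn n β cβ) (f : ColouredPartialIso cα cβ) (a : α) :
    ∃ b, cβ b = cα a ∧ ∀ p ∈ f.val.val, cmp p.1 a = cmp p.2 b := by
  obtain ⟨-, _, _, _, _, -⟩ := id hβ
  -- `b` sits in the right gap of the range of `f`; only its colour may need fixing.
  obtain ⟨b, hb⟩ := f.val.exists_across a
  by_cases hmem : b ∈ f.val.val.image Prod.snd
  · obtain ⟨p, hp, rfl⟩ := Finset.mem_image.1 hmem
    have hpa : p.1 = a := by simpa using hb p hp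
    exact ⟨p.2, hpa ▸ f.prop p hp, hb⟩
  · obtain ⟨b', hcol, hb'⟩ := hβ.exists_cmp_eq hmem (cα a)
    exact ⟨b', hcol, fun p hp => (hb p hp).trans (hb' _ (Finset.mem_image_of_mem _ hp)).symm⟩

def definedAtLeft (hβ : IsQn n β cβ) (a : α) : Order.Cofinal (ColouredPartialIso cα cβ) where
  carrier := {f | ∃ b, (a, b) ∈ f.val.val}
  isCofinal f := by
    obtain ⟨b, hcol, hb⟩ := exists_across hβ f a
    refine ⟨⟨⟨insert (a, b) f.val.val, fun p hp q hq => ?_⟩, ?_⟩,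
      ⟨b, Finset.mem_insert_self _ _⟩, Finset.subset_insert _ _⟩
    · rw [Finset.mem_insert] at hp hq
      rcases hp with rfl | hp <;> rcases hq with rfl | hq
      · simp only [cmp_self_eq_eq]
      · exact cmp_eq_cmp_symm.1 (hb q hq)
      · exact hb p hp
      · exact f.val.prop p hp q hq
    · simpa [hcol] using f.prop

def definedAtRight (hα : IsQn n α cα) (b : β) : Order.Cofinal (ColouredPartialIso cα cβ) where
  carrier := {f | ∃ a, (a, b) ∈ f.val.val}
  isCofinal f := by
    obtain ⟨g, ⟨a, ha⟩, hfg⟩ := (definedAtLeft hα b).isCofinal f.comm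
    exact ⟨g.comm, ⟨a, mem_comm.2 ha⟩, comm_comm f ▸ comm_le_comm hfg⟩

end ColouredPartialIso

open ColouredPartialIso in
theorem IsQn.exists_orderIso {cα : α → Fin n} {cβ : β → Fin n}
    (hα : IsQn n α cα) (hβ : IsQn n β cβ) : ∃ e : α ≃o β, ∀ a, cβ (e a) = cα a := by
  have := hα.1; have := hβ.1
  cases nonempty_encodable α; cases nonempty_encodable β
  let D : α ⊕ β → Order.Cofinal (ColouredPartialIso cα cβ) :=
    Sum.elim (definedAtLeft hβ) (definedAtRight hα)
  let I := Order.idealOfCofinals default D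
  have hF : ∀ a, ∃ b, ∃ f ∈ I, (a, b) ∈ f.val.val := fun a => by
    obtain ⟨f, ⟨b, hb⟩, hf⟩ := Order.cofinal_meets_idealOfCofinals default D (Sum.inl a)
    exact ⟨b, f, hf, hb⟩
  have hG : ∀ b, ∃ a, ∃ f ∈ I, (a, b) ∈ f.val.val := fun b => by
    obtain ⟨f, ⟨a, ha⟩, hf⟩ := Order.cofinal_meets_idealOfCofinals default D (Sum.inr b)
    exact ⟨a, f, hf, ha⟩
  choose F hF using hF
  choose G hG using hG
  refine ⟨OrderIso.ofCmpEqCmp F G fun a b => ?_, fun a => ?_⟩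
  · obtain ⟨f, hf, ha⟩ := hF a
    obtain ⟨g, hg, hb⟩ := hG b
    obtain ⟨m, -, hfm, hgm⟩ := I.directed _ hf _ hg
    exact m.val.prop _ (hfm ha) _ (hgm hb)
  · obtain ⟨f, -, ha⟩ := hF a
    exact f.prop _ ha

namespace OrderIso

def sigmaLexCongrLeft (e : ι ≃o κ) (γ : κ → Type*) [∀ k, LinearOrder (γ k)] :
    (Σₗ i, γ (e i)) ≃o Σₗ k, γ k :=
  StrictMono.orderIsoOfSurjective (toLex ∘ Equiv.sigmaCongrLeft e.toEquiv ∘ ofLex)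
    (by
      rintro ⟨i, a⟩ ⟨j, b⟩ h
      rcases Sigma.Lex.lt_def.1 h with h | ⟨hij, h⟩
      · exact Sigma.Lex.lt_def.2 (Or.inl (e.strictMono h))
      · obtain rfl : i = j := hij
        exact Sigma.Lex.lt_def.2 (Or.inr ⟨rfl, h⟩))
    (toLex.surjective.comp ((Equiv.sigmaCongrLeft _).surjective.comp ofLex.surjective))

theorem nonempty_sigmaLex_of_comp_eq {c : ι → σ} {c' : κ → σ} (L : σ → Type*)
    [∀ s, LinearOrder (L s)] (e : ι ≃o κ) (h : ∀ i, c' (e i) = c i) :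
    Nonempty ((Σₗ i, L (c i)) ≃o Σₗ k, L (c' k)) := by
  obtain rfl : c = c' ∘ e := funext fun i => (h i).symm
  exact ⟨sigmaLexCongrLeft e fun k => L (c' k)⟩

def sigmaLexUnit (β : Type*) [LinearOrder β] : (Σₗ _ : Unit, β) ≃o β where
  toFun x := (ofLex x).2
  invFun b := toLex ⟨(), b⟩
  map_rel_iff' {x y} := by
    obtain ⟨⟨⟩, a⟩ := x
    obtain ⟨⟨⟩, b⟩ := y
    refine ⟨fun h => Sigma.Lex.le_def.2 (Or.inr ⟨rfl, h⟩), fun h => ?_⟩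
    rcases Sigma.Lex.le_def.1 h with h | ⟨_, h⟩
    · exact absurd h (lt_irrefl _)
    · exact h

def sigmaLexSumLex (γ : α ⊕ₗ β → Type*) [∀ x, LinearOrder (γ x)] :
    (Σₗ x, γ x) ≃o (Σₗ a, γ (toLex (inl a))) ⊕ₗ (Σₗ b, γ (toLex (inr b))) :=
  StrictMono.orderIsoOfSurjective
    (fun x => match x with
      | ⟨Sum.inl a, c⟩ => toLex (inl (toLex ⟨a, c⟩))
      | ⟨Sum.inr b, c⟩ => toLex (inr (toLex ⟨b, c⟩)))
    (by
      rintro ⟨x, c⟩ ⟨y, c'⟩ h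
      rcases Sigma.Lex.lt_def.1 h with hxy | ⟨hxy, hc⟩
      · rcases x with a | b <;> rcases y with a' | b'
        · exact Sum.Lex.inl_lt_inl_iff.2
            (Sigma.Lex.lt_def.2 (Or.inl (Sum.Lex.inl_lt_inl_iff.1 hxy)))
        · exact Sum.Lex.inl_lt_inr _ _
        · exact absurd hxy Sum.Lex.not_inr_lt_inl
        · exact Sum.Lex.inr_lt_inr_iff.2
            (Sigma.Lex.lt_def.2 (Or.inl (Sum.Lex.inr_lt_inr_iff.1 hxy)))
      · obtain rfl : x = y := hxy
        rcases x with a | b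
        · exact Sum.Lex.inl_lt_inl_iff.2 (Sigma.Lex.lt_def.2 (Or.inr ⟨rfl, hc⟩))
        · exact Sum.Lex.inr_lt_inr_iff.2 (Sigma.Lex.lt_def.2 (Or.inr ⟨rfl, hc⟩)))
    (by
      rintro (⟨a, c⟩ | ⟨b, c⟩)
      · exact ⟨toLex ⟨toLex (inl a), c⟩, rfl⟩
      · exact ⟨toLex ⟨toLex (inr b), c⟩, rfl⟩)

end OrderIso

end

theorem shuffle_insert_concat_general (n : ℕ) (Q : Type*) [LinearOrder Q] (c : Q → Fin n)
    (hQ : IsQn n Q c) (L : Fin n → Type*) [∀ i, LinearOrder (L i)]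
    (i : Fin n) :
    Nonempty ((Σₗ q : Q, L (c q)) ≃o
      ((Σₗ q : Q, L (c q)) ⊕ₗ (L i ⊕ₗ (Σₗ q : Q, L (c q))))) := by
  obtain ⟨e, he⟩ := hQ.exists_orderIso (hQ.sumLex_unit_sumLex hQ i)
  obtain ⟨f⟩ := OrderIso.nonempty_sigmaLex_of_comp_eq L e he
  exact ⟨f.trans <| (OrderIso.sigmaLexSumLex _).trans <| OrderIso.sumLexCongr (.refl _) <|
    (OrderIso.sigmaLexSumLex _).trans <| OrderIso.sumLexCongr (OrderIso.sigmaLexUnit _) (.refl _)⟩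

/-- Inserting a copy of one of the shuffled orders between two copies of the shuffle
yields the shuffle again: ℚ_n(L) ≅ ℚ_n(L) ^ L_i ^ ℚ_n(L). -/
theorem shuffle_insert_concat (n : ℕ) (Q : Type*) [LinearOrder Q] (c : Q → Fin n)
    (hQ : IsQn n Q c) (L : Fin n → Type*) [∀ i, LinearOrder (L i)] [∀ i, Nonempty (L i)]
    (i : Fin n) :
    Nonempty ((Σₗ q : Q, L (c q)) ≃o
      ((Σₗ q : Q, L (c q)) ⊕ₗ (L i ⊕ₗ (Σₗ q : Q, L (c q))))) :=
  shuffle_insert_concat_general n Q c hQ L i
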